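/- (Persistence of the leading mass; key step of Lemma 1.) Let n ≥ 1, let W be an n×n binary column stochastic matrix, let z ∈ ℤ^n have nonnegative entries, and let y ∈ ℤ^n satisfy: z_i = 0 implies y_i = 0 for every i. Suppose the index j holds the leading mass, i.e., z_j ≥ z_i for all i, and y_j ≥ y_i for all i with z_i = z_j. Then there exists an index l such that either (W·z)_l > z_j, or both (W·z)_l = z_j and (W·y)_l ≥ y_j; that is, after one step of the mass-transfer process some node holds a mass pair that is at least as large (in the lexicographic order on (z, y)) as the current leading mass. -/
import Mathlib


/-- Persistence of the leading mass: Let `W` be binary column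
stochastic, `z` nonnegative with `z i = 0 → y i = 0`, and let `j` hold the
leading mass (`z j` maximal, and `y j` maximal among indices attaining `z j`).
Then after one step some index `l` holds a mass pair at least as large in the
lexicographic order on `(z, y)`: either `(W ⬝ z) l > z j`, or
`(W ⬝ z) l = z j` and `(W ⬝ y) l ≥ y j`. -/
theorem leading_mass_persists
    (n : ℕ) (hn : 1 ≤ n)
    (W : Matrix (Fin n) (Fin n) ℤ)
    (hbin : ∀ i j, W i j = 0 ∨ W i j = 1)
    (hcol : ∀ j, ∑ i, W i j = 1)
    (z y : Fin n → ℤ) (hz : ∀ i, 0 ≤ z i)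
    (hzy : ∀ i, z i = 0 → y i = 0)
    (j : Fin n)
    (hzmax : ∀ i, z i ≤ z j)
    (hymax : ∀ i, z i = z j → y i ≤ y j) :
    ∃ l, z j < W.mulVec z l ∨ (W.mulVec z l = z j ∧ y j ≤ W.mulVec y l) := by
  -- find row l with W l j = 1
  obtain ⟨l, hl⟩ : ∃ l, W l j = 1 := by
    by_contra h
    push_neg at h
    have h0 : ∀ i, W i j = 0 := fun i => (hbin i j).resolve_right (h i)
    have := hcol j
    simp [h0] at this
  refine ⟨l, ?_⟩
  have hsplit : W.mulVec z l = z j + ∑ k ∈ Finset.univ.erase j, W l k * z k := by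
    rw [Matrix.mulVec, dotProduct,
      ← Finset.add_sum_erase Finset.univ (fun k => W l k * z k) (Finset.mem_univ j),
      hl, one_mul]
  have hnn : ∀ k ∈ Finset.univ.erase j, (0:ℤ) ≤ W l k * z k := by
    intro k _
    rcases hbin l k with h | h <;> simp [h, hz k]
  have hge : z j ≤ W.mulVec z l := by
    rw [hsplit]
    have := Finset.sum_nonneg hnn
    linarith
  rcases lt_or_eq_of_le hge with h | h
  · exact Or.inl h
  · refine Or.inr ⟨h.symm, ?_⟩
    have hzero : ∑ k ∈ Finset.univ.erase j, W l k * z k = 0 := by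
      rw [hsplit] at h; linarith
    have hterm : ∀ k ∈ Finset.univ.erase j, W l k * z k = 0 :=
      (Finset.sum_eq_zero_iff_of_nonneg hnn).mp hzero
    have hyterm : ∀ k ∈ Finset.univ.erase j, W l k * y k = 0 := by
      intro k hk
      rcases hbin l k with h1 | h1
      · simp [h1]
      · have := hterm k hk
        rw [h1, one_mul] at this ⊢
        exact hzy k this
    have : W.mulVec y l = y j := by
      rw [Matrix.mulVec, dotProduct,
        ← Finset.add_sum_erase Finset.univ (fun k => W l k * y k) (Finset.mem_univ j),
        hl, one_mul, Finset.sum_eq_zero hyterm, add_zero]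
    rw [this]
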